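/- arXiv:2405.11771 — 6 statements merged into one kernel-verified Lean document; each statement's English description precedes it below -/
import Mathlib

section
/- Let n ≥ 1 and fix (x,χ) ∈ 𝒞. On the tangent space T = {(v,w) ∈ ℝ^{n+1} × ℝ^{n+1} : ⟨v,χ⟩ + ⟨x,w⟩ = 0} define the skew-symmetric bilinear form ω̂((v,w),(v′,w′)) = ½(⟨v,w′⟩ − ⟨v′,w⟩). Then the kernel of ω̂ restricted to T, namely {(v,w) ∈ T : ω̂((v,w),(v′,w′)) = 0 for all (v′,w′) ∈ T}, is exactly the one-dimensional subspace ℝ·(x,−χ). -/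
open RealInnerProductSpace

/-- At a point `(x,χ)` of the quadric `𝒞`, the kernel of the
skew-symmetric form `ω̂((v,w),(v',w')) = ½(⟨v,w'⟩ − ⟨v',w⟩)` restricted to the tangent
space `T = {(v,w) : ⟨v,χ⟩ + ⟨x,w⟩ = 0}` is exactly the line `ℝ · (x, −χ)`. -/
theorem stmt_5 (n : ℕ) (hn : 1 ≤ n)
    (x χ : EuclideanSpace ℝ (Fin (n + 1))) (hxχ : ⟪x, χ⟫ = 1) :
    {p : EuclideanSpace ℝ (Fin (n + 1)) × EuclideanSpace ℝ (Fin (n + 1)) |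
        (⟪p.1, χ⟫ + ⟪x, p.2⟫ = 0) ∧
        ∀ q : EuclideanSpace ℝ (Fin (n + 1)) × EuclideanSpace ℝ (Fin (n + 1)),
          ⟪q.1, χ⟫ + ⟪x, q.2⟫ = 0 → (⟪p.1, q.2⟫ - ⟪q.1, p.2⟫) / 2 = 0}
      = {p | ∃ a : ℝ, p = a • (x, -χ)} := by
  ext p
  obtain ⟨v, w⟩ := p
  simp only [Set.mem_setOf_eq]
  constructor
  · rintro ⟨ht, hk⟩
    have hw : w ∈ (ℝ ∙ χ) := by
      rw [← Submodule.orthogonal_orthogonal (ℝ ∙ χ)]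
      rw [Submodule.mem_orthogonal]
      intro u hu
      have huχ : ⟪u, χ⟫ = (0 : ℝ) := by
        have := (Submodule.mem_orthogonal _ u).mp hu χ (Submodule.mem_span_singleton_self χ)
        rwa [real_inner_comm] at this
      have h := hk (u, 0) (by simp [huχ])
      simp only [inner_zero_right, zero_sub, neg_div, neg_eq_zero, div_eq_zero_iff] at h
      rcases h with h | h
      · exact h
      · norm_num at h
    have hv : v ∈ (ℝ ∙ x) := by
      rw [← Submodule.orthogonal_orthogonal (ℝ ∙ x)]
      rw [Submodule.mem_orthogonal]
      intro u hu
      have hux : ⟪x, u⟫ = (0 : ℝ) := by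
        have := (Submodule.mem_orthogonal _ u).mp hu x (Submodule.mem_span_singleton_self x)
        exact this
      have h := hk (0, u) (by simp [hux])
      simp only [inner_zero_left, sub_zero, div_eq_zero_iff] at h
      rcases h with h | h
      · rw [real_inner_comm] at h; exact h
      · norm_num at h
    obtain ⟨a, rfl⟩ := Submodule.mem_span_singleton.mp hv
    obtain ⟨b, rfl⟩ := Submodule.mem_span_singleton.mp hw
    rw [real_inner_smul_left, hxχ, real_inner_smul_right, hxχ] at ht
    refine ⟨a, ?_⟩
    have hb : b = -a := by linarith
    simp [hb, Prod.ext_iff, neg_smul, smul_neg]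
  · rintro ⟨a, hp⟩
    rw [Prod.ext_iff] at hp
    simp only [Prod.smul_fst, Prod.smul_snd] at hp
    obtain ⟨rfl, rfl⟩ := hp
    constructor
    · rw [real_inner_smul_left, hxχ, real_inner_smul_right, inner_neg_right, hxχ]
      ring
    · intro q hq
      rw [real_inner_smul_left, real_inner_smul_right, inner_neg_right]
      linear_combination (a / 2) * hq
end

section
/- Let n ≥ 1 and define f : ℙ(ℝ^{n+1}) → DP by f([x]) = ([x],[x]) (this is well defined since ⟨x,x⟩ > 0 for x ≠ 0). Then f admits no lift to 𝒞: there is no continuous map f̃ : ℙ(ℝ^{n+1}) → 𝒞 with π_H ∘ f̃ = f. -/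
open RealInnerProductSpace

noncomputable section

/-- The real projective space `ℙ(ℝ^{n+1})`, with the quotient topology. -/
instance projTop (n : ℕ) :
    TopologicalSpace (Projectivization ℝ (EuclideanSpace ℝ (Fin (n + 1)))) :=
  inferInstanceAs
    (TopologicalSpace (Quotient (projectivizationSetoid ℝ (EuclideanSpace ℝ (Fin (n + 1))))))

/-- The (diagonal) immersion `f : ℙ(ℝ^{n+1}) → DP`, `f([x]) = ([x],[x])`,
admits no continuous lift `f̃ : ℙ(ℝ^{n+1}) → 𝒞` with `π_H ∘ f̃ = f`. -/
theorem stmt_8 (n : ℕ) (hn : 1 ≤ n) :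
    ¬ ∃ ft : Projectivization ℝ (EuclideanSpace ℝ (Fin (n + 1))) →
        EuclideanSpace ℝ (Fin (n + 1)) × EuclideanSpace ℝ (Fin (n + 1)),
      Continuous ft ∧
      ∀ q : Projectivization ℝ (EuclideanSpace ℝ (Fin (n + 1))),
        ⟪(ft q).1, (ft q).2⟫ = 1 ∧
        ∃ (h1 : (ft q).1 ≠ 0) (h2 : (ft q).2 ≠ 0),
          (Projectivization.mk ℝ (ft q).1 h1, Projectivization.mk ℝ (ft q).2 h2) = (q, q) := by
  rintro ⟨ft, hcont, hft⟩
  set V := EuclideanSpace ℝ (Fin (n + 1)) with hV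
  -- the sphere is connected since dim = n+1 ≥ 2
  have hrank : 1 < Module.rank ℝ V := by
    rw [← Module.finrank_eq_rank]
    have : Module.finrank ℝ V = n + 1 := finrank_euclideanSpace_fin
    rw [this]
    exact_mod_cast Nat.lt_succ_of_le hn
  haveI : ConnectedSpace (Metric.sphere (0 : V) 1) :=
    Subtype.connectedSpace (isConnected_sphere hrank 0 zero_le_one)
  -- the map from the sphere to projective space
  have hne : ∀ v : Metric.sphere (0 : V) 1, (v : V) ≠ 0 := fun v =>
    ne_zero_of_mem_unit_sphere v
  let mkS : Metric.sphere (0 : V) 1 → Projectivization ℝ V := fun v =>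
    Projectivization.mk ℝ (v : V) (hne v)
  have hmkS : Continuous mkS := by
    have h1 : Continuous (fun w : { v : V // v ≠ 0 } =>
        Projectivization.mk ℝ w.1 w.2) := continuous_quotient_mk'
    have h2 : Continuous (fun v : Metric.sphere (0 : V) 1 =>
        (⟨(v : V), hne v⟩ : { v : V // v ≠ 0 })) :=
      Continuous.subtype_mk continuous_subtype_val _
    exact h1.comp h2
  -- the scalar function
  let h : Metric.sphere (0 : V) 1 → ℝ := fun v => ⟪(v : V), (ft (mkS v)).1⟫
  have hhc : Continuous h := by
    apply Continuous.inner continuous_subtype_val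
    exact (continuous_fst.comp hcont).comp hmkS
  -- h never vanishes
  have hnz : ∀ v, h v ≠ 0 := by
    intro v
    obtain ⟨_, h1, h2, heq⟩ := hft (mkS v)
    have hm : Projectivization.mk ℝ (ft (mkS v)).1 h1 = mkS v :=
      congrArg Prod.fst heq
    rw [Projectivization.mk_eq_mk_iff] at hm
    obtain ⟨a, ha⟩ := hm
    have hvv : ⟪(v : V), (v : V)⟫ = 1 := by
      rw [real_inner_self_eq_norm_sq, norm_eq_of_mem_sphere v]; norm_num
    have : h v = (a : ℝ) := by
      simp only [h, ← ha, real_inner_smul_right, hvv, mul_one, Units.smul_def, smul_eq_mul]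
    rw [this]
    exact a.ne_zero
  -- h is odd
  have hodd : ∀ v : Metric.sphere (0 : V) 1, h (-v) = -h v := by
    intro v
    have hmk : mkS (-v) = mkS v := by
      rw [Projectivization.mk_eq_mk_iff]
      refine ⟨-1, ?_⟩
      simp
    simp only [h, hmk]
    have : ((-v : Metric.sphere (0 : V) 1) : V) = -(v : V) := rfl
    rw [this, inner_neg_left]
  -- contradiction via IVT
  obtain ⟨v₀⟩ : Nonempty (Metric.sphere (0 : V) 1) :=
    ⟨⟨EuclideanSpace.single 0 1, by rw [mem_sphere_zero_iff_norm, EuclideanSpace.norm_single]; norm_num⟩⟩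
  have h0 : (0 : ℝ) ∈ Set.range h := by
    rcases le_or_gt (h v₀) 0 with hle | hlt
    · have := intermediate_value_univ v₀ (-v₀) hhc
      apply this
      constructor
      · exact hle
      · rw [hodd]; linarith
    · have := intermediate_value_univ (-v₀) v₀ hhc
      apply this
      constructor
      · rw [hodd]; linarith
      · exact le_of_lt hlt
  obtain ⟨v, hv⟩ := h0
  exact hnz v hv

end
end

section
/- Fix H ∈ {1,−1} and let σ_H(X) = −P_H^ε Xᵀ P_H^ε on the Lie algebra 𝔰𝔩(3,ℂ) of trace-zero complex 3×3 matrices. Then σ_H is a Lie algebra automorphism of 𝔰𝔩(3,ℂ) (it is a linear bijection preserving the commutator bracket and the trace-zero condition) of order exactly 6: σ_H⁶ = id, and σ_H^k ≠ id on 𝔰𝔩(3,ℂ) for 1 ≤ k ≤ 5. -/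
open Matrix Complex

noncomputable section

/-- `ε = e^{iπ/3}`. -/
def eps : ℂ := Complex.exp (Real.pi * Complex.I / 3)

/-- The matrix `P_H^ε` with rows `(0, ε², 0)`, `(ε⁴, 0, 0)`, `(0, 0, −H)`. -/
def PHeps (H : ℝ) : Matrix (Fin 3) (Fin 3) ℂ :=
  !![0, eps ^ 2, 0; eps ^ 4, 0, 0; 0, 0, -(H : ℂ)]

/-- `σ_H(X) = −P_H^ε Xᵀ P_H^ε`. -/
def sigmaH (H : ℝ) (X : Matrix (Fin 3) (Fin 3) ℂ) : Matrix (Fin 3) (Fin 3) ℂ :=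
  -(PHeps H * Xᵀ * PHeps H)

lemma eps_cube : eps ^ 3 = -1 := by
  rw [eps, ← Complex.exp_nat_mul]
  rw [show ((3:ℕ):ℂ) * (↑Real.pi * Complex.I / 3) = ↑Real.pi * Complex.I by push_cast; ring]
  exact Complex.exp_pi_mul_I

lemma eps_six : eps ^ 6 = 1 := by
  have h := eps_cube
  calc eps ^ 6 = (eps ^ 3) ^ 2 := by ring
  _ = 1 := by rw [h]; ring

lemma eps_pow_ne_one {k : ℕ} (h1 : 1 ≤ k) (h5 : k ≤ 5) : eps ^ k ≠ 1 := by
  intro h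
  rw [eps, ← Complex.exp_nat_mul, Complex.exp_eq_one_iff] at h
  obtain ⟨n, hn⟩ := h
  have hπ : (Real.pi : ℂ) ≠ 0 := by exact_mod_cast Real.pi_ne_zero
  have hk : (k : ℂ) = 6 * n := by
    have h3 : (k:ℂ) * ((Real.pi:ℂ) * Complex.I) = (6*n) * ((Real.pi:ℂ) * Complex.I) := by
      linear_combination 3 * hn
    exact mul_right_cancel₀ (mul_ne_zero hπ Complex.I_ne_zero) h3
  have hk' : (k : ℤ) = 6 * n := by exact_mod_cast hk
  omega

lemma hP2 (H : ℝ) (hH : H = 1 ∨ H = -1) : PHeps H * PHeps H = 1 := by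
  have h6 := eps_six
  rcases hH with h | h <;> subst h <;> ext i j <;> fin_cases i <;> fin_cases j <;>
    simp [PHeps, Matrix.mul_apply, Fin.sum_univ_three, Matrix.one_apply,
      Matrix.vecHead, Matrix.vecTail] <;>
    linear_combination h6

lemma sigma_sq (H : ℝ) (X : Matrix (Fin 3) (Fin 3) ℂ) :
    sigmaH H (sigmaH H X) =
      (PHeps H * (PHeps H)ᵀ) * X * ((PHeps H)ᵀ * PHeps H) := by
  simp only [sigmaH, Matrix.transpose_neg, Matrix.transpose_mul, Matrix.transpose_transpose,
    Matrix.mul_neg, Matrix.neg_mul, neg_neg, Matrix.mul_assoc]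

lemma hQ3 (H : ℝ) (hH : H = 1 ∨ H = -1) :
    (PHeps H * (PHeps H)ᵀ) * (PHeps H * (PHeps H)ᵀ) * (PHeps H * (PHeps H)ᵀ) = 1 := by
  have h6 := eps_six
  rcases hH with h | h <;> subst h <;> ext i j <;> fin_cases i <;> fin_cases j <;>
    simp only [Matrix.mul_apply, Matrix.transpose_apply, Fin.sum_univ_three] <;>
    simp [PHeps, Matrix.mul_apply, Matrix.transpose_apply, Fin.sum_univ_three,
      Matrix.one_apply, Matrix.vecHead, Matrix.vecTail] <;>
    first
      | linear_combination (eps ^ 6 + 1) * h6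
      | linear_combination (eps ^ 18 + eps ^ 12 + eps ^ 6 + 1) * h6
      | linear_combination h6

lemma hQ3' (H : ℝ) (hH : H = 1 ∨ H = -1) :
    ((PHeps H)ᵀ * PHeps H) * ((PHeps H)ᵀ * PHeps H) * ((PHeps H)ᵀ * PHeps H) = 1 := by
  have h6 := eps_six
  rcases hH with h | h <;> subst h <;> ext i j <;> fin_cases i <;> fin_cases j <;>
    simp only [Matrix.mul_apply, Matrix.transpose_apply, Fin.sum_univ_three] <;>
    simp [PHeps, Matrix.mul_apply, Matrix.transpose_apply, Fin.sum_univ_three,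
      Matrix.one_apply, Matrix.vecHead, Matrix.vecTail] <;>
    first
      | linear_combination (eps ^ 6 + 1) * h6
      | linear_combination (eps ^ 18 + eps ^ 12 + eps ^ 6 + 1) * h6
      | linear_combination h6

lemma sigma6 (H : ℝ) (hH : H = 1 ∨ H = -1) (X : Matrix (Fin 3) (Fin 3) ℂ) :
    (sigmaH H)^[6] X = X := by
  show sigmaH H (sigmaH H (sigmaH H (sigmaH H (sigmaH H (sigmaH H X))))) = X
  set Q := PHeps H * (PHeps H)ᵀ with hQ
  set Q' := (PHeps H)ᵀ * PHeps H with hQ'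
  rw [sigma_sq, sigma_sq, sigma_sq]
  have hre : Q * (Q * (Q * X * Q') * Q') * Q' = (Q * Q * Q) * X * (Q' * Q' * Q') := by
    simp only [Matrix.mul_assoc]
  rw [hre, hQ3 H hH, hQ3' H hH, Matrix.one_mul, Matrix.mul_one]

/-- For `H ∈ {1, −1}`, the map `σ_H(X) = −P_H^ε Xᵀ P_H^ε` is a Lie
algebra automorphism of `𝔰𝔩(3,ℂ)` (a linear bijection of the trace-zero matrices which
preserves the commutator bracket) of order exactly `6`: `σ_H⁶ = id` but `σ_H^k ≠ id` on
`𝔰𝔩(3,ℂ)` for `1 ≤ k ≤ 5`. -/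
theorem stmt_12 (H : ℝ) (hH : H = 1 ∨ H = -1) :
    (∀ X Y : Matrix (Fin 3) (Fin 3) ℂ, sigmaH H (X + Y) = sigmaH H X + sigmaH H Y) ∧
    (∀ (c : ℂ) (X : Matrix (Fin 3) (Fin 3) ℂ), sigmaH H (c • X) = c • sigmaH H X) ∧
    (∀ X : Matrix (Fin 3) (Fin 3) ℂ, X.trace = 0 → (sigmaH H X).trace = 0) ∧
    (∀ X Y : Matrix (Fin 3) (Fin 3) ℂ,
      sigmaH H (X * Y - Y * X) = sigmaH H X * sigmaH H Y - sigmaH H Y * sigmaH H X) ∧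
    Set.BijOn (sigmaH H) {X | X.trace = 0} {X | X.trace = 0} ∧
    (∀ X : Matrix (Fin 3) (Fin 3) ℂ, X.trace = 0 → (sigmaH H)^[6] X = X) ∧
    (∀ k : ℕ, 1 ≤ k → k ≤ 5 →
      ∃ X : Matrix (Fin 3) (Fin 3) ℂ, X.trace = 0 ∧ (sigmaH H)^[k] X ≠ X) := by
  have hadd : ∀ X Y : Matrix (Fin 3) (Fin 3) ℂ,
      sigmaH H (X + Y) = sigmaH H X + sigmaH H Y := by
    intro X Y
    simp only [sigmaH, Matrix.transpose_add, Matrix.mul_add, Matrix.add_mul]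
    abel
  have hsmul : ∀ (c : ℂ) (X : Matrix (Fin 3) (Fin 3) ℂ),
      sigmaH H (c • X) = c • sigmaH H X := by
    intro c X
    simp [sigmaH, Matrix.transpose_smul, Matrix.mul_smul, Matrix.smul_mul]
  have htr : ∀ X : Matrix (Fin 3) (Fin 3) ℂ, X.trace = 0 → (sigmaH H X).trace = 0 := by
    intro X hX
    rw [sigmaH, Matrix.trace_neg, Matrix.trace_mul_cycle, hP2 H hH, Matrix.one_mul,
      Matrix.trace_transpose, hX, neg_zero]
  have hmul : ∀ X Y : Matrix (Fin 3) (Fin 3) ℂ,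
      sigmaH H X * sigmaH H Y = PHeps H * (Xᵀ * Yᵀ) * PHeps H := by
    intro X Y
    simp only [sigmaH, Matrix.neg_mul, Matrix.mul_neg, neg_neg, Matrix.mul_assoc]
    rw [← Matrix.mul_assoc (PHeps H) (PHeps H) (Yᵀ * PHeps H), hP2 H hH, Matrix.one_mul]
  have hbr : ∀ X Y : Matrix (Fin 3) (Fin 3) ℂ,
      sigmaH H (X * Y - Y * X) = sigmaH H X * sigmaH H Y - sigmaH H Y * sigmaH H X := by
    intro X Y
    rw [hmul, hmul]
    simp [sigmaH, Matrix.transpose_sub, Matrix.transpose_mul, Matrix.mul_sub,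
      Matrix.sub_mul, Matrix.mul_assoc, neg_sub]
  have h6 := sigma6 H hH
  have hiterTr : ∀ (n : ℕ) (X : Matrix (Fin 3) (Fin 3) ℂ),
      X.trace = 0 → ((sigmaH H)^[n] X).trace = 0 := by
    intro n
    induction n with
    | zero => intro X hX; simpa using hX
    | succ n ih =>
      intro X hX
      rw [Function.iterate_succ', Function.comp_apply]
      exact htr _ (ih X hX)
  refine ⟨hadd, hsmul, htr, hbr, ⟨?_, ?_, ?_⟩, fun X _ => h6 X, ?_⟩
  · intro X hX; exact htr X hX
  · intro X _ Y _ hXY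
    have : (sigmaH H)^[5] (sigmaH H X) = (sigmaH H)^[5] (sigmaH H Y) := by rw [hXY]
    calc X = (sigmaH H)^[6] X := (h6 X).symm
      _ = (sigmaH H)^[5] (sigmaH H X) := Function.iterate_succ_apply (sigmaH H) 5 X
      _ = (sigmaH H)^[5] (sigmaH H Y) := this
      _ = (sigmaH H)^[6] Y := (Function.iterate_succ_apply (sigmaH H) 5 Y).symm
      _ = Y := h6 Y
  · intro Y hY
    refine ⟨(sigmaH H)^[5] Y, hiterTr 5 Y hY, ?_⟩
    rw [← Function.iterate_succ_apply' (sigmaH H) 5 Y]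
    exact h6 Y
  · intro k hk1 hk5
    set E : Matrix (Fin 3) (Fin 3) ℂ := !![0, 1, 0; 0, 0, 0; 0, 0, 0] with hE
    have htrE : E.trace = 0 := by
      simp [hE, Matrix.trace_fin_three, Matrix.vecHead, Matrix.vecTail]
    have hEeig : sigmaH H E = eps • E := by
      have h3 := eps_cube
      ext i j
      fin_cases i <;> fin_cases j <;>
        simp only [sigmaH, Matrix.neg_apply, Matrix.mul_apply, Matrix.transpose_apply,
          Fin.sum_univ_three] <;>
        simp [sigmaH, PHeps, hE, Matrix.mul_apply, Matrix.transpose_apply,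
          Fin.sum_univ_three, Matrix.smul_apply, Matrix.vecHead, Matrix.vecTail] <;>
        first
          | linear_combination (-eps) * h3
          | rfl
          | simp [Matrix.vecHead, Matrix.vecTail]
    have hiterE : ∀ n : ℕ, (sigmaH H)^[n] E = eps ^ n • E := by
      intro n
      induction n with
      | zero => simp
      | succ n ih =>
        rw [Function.iterate_succ_apply', ih, hsmul, hEeig, smul_smul, pow_succ]
    refine ⟨E, htrE, ?_⟩
    rw [hiterE k]
    intro hcontra
    have h01 : (eps ^ k • E) 0 1 = E 0 1 := by rw [hcontra]
    have hE01 : E 0 1 = 1 := by simp [hE]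
    rw [Matrix.smul_apply, hE01, smul_eq_mul, mul_one] at h01
    exact eps_pow_ne_one hk1 hk5 h01

end
end

section
/- Fix H ∈ {1,−1}. On 𝔰𝔩(3,ℂ) the anti-linear involution τ(X) = P_H X̄ P_H and the order-6 automorphism σ_H(X) = −P_H^ε Xᵀ P_H^ε commute: τ(σ_H(X)) = σ_H(τ(X)) for all X ∈ 𝔰𝔩(3,ℂ). -/
open Matrix Complex

noncomputable section

/-- The matrix `P_H` with rows `(0,1,0)`, `(1,0,0)`, `(0,0,−H)`. -/
def PH (H : ℝ) : Matrix (Fin 3) (Fin 3) ℂ :=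
  !![0, 1, 0; 1, 0, 0; 0, 0, -(H : ℂ)]

/-- `τ(X) = P_H X̄ P_H`, where `X̄` is the entrywise complex conjugate. -/
def tauH (H : ℝ) (X : Matrix (Fin 3) (Fin 3) ℂ) : Matrix (Fin 3) (Fin 3) ℂ :=
  PH H * X.map (starRingEnd ℂ) * PH H

/-- For `H ∈ {1, −1}`, the anti-linear involution `τ(X) = P_H X̄ P_H`
and the order-6 automorphism `σ_H(X) = −P_H^ε Xᵀ P_H^ε` commute on `𝔰𝔩(3,ℂ)`. -/
theorem stmt_13 (H : ℝ) (hH : H = 1 ∨ H = -1) :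
    ∀ X : Matrix (Fin 3) (Fin 3) ℂ, X.trace = 0 →
      tauH H (sigmaH H X) = sigmaH H (tauH H X) := by
  have h6 : eps ^ 6 = 1 := by
    rw [eps, ← Complex.exp_nat_mul]
    rw [show (6 : ℕ) * (↑Real.pi * Complex.I / 3) = 2 * ↑Real.pi * Complex.I by ring]
    exact Complex.exp_two_pi_mul_I
  have hst : (starRingEnd ℂ) eps * eps = 1 := by
    rw [eps, ← Complex.exp_conj, ← Complex.exp_add]
    rw [show (starRingEnd ℂ) (↑Real.pi * Complex.I / 3) + ↑Real.pi * Complex.I / 3 = 0 by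
      rw [map_div₀, _root_.map_mul, Complex.conj_ofReal, Complex.conj_I, map_ofNat]; ring]
    exact Complex.exp_zero
  have hc2 : (starRingEnd ℂ) (eps ^ 2) = eps ^ 4 := by
    have : (starRingEnd ℂ) (eps ^ 2) * eps ^ 2 = eps ^ 4 * eps ^ 2 := by
      rw [map_pow]
      calc ((starRingEnd ℂ) eps) ^ 2 * eps ^ 2 = ((starRingEnd ℂ) eps * eps) ^ 2 := by ring
        _ = 1 := by rw [hst]; ring
        _ = eps ^ 4 * eps ^ 2 := by rw [← h6]; ring
    have heps : eps ≠ 0 := by rw [eps]; exact Complex.exp_ne_zero _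
    field_simp at this
    rw [map_pow]
    rwa [map_pow] at this
  have hc4 : (starRingEnd ℂ) (eps ^ 4) = eps ^ 2 := by
    have := congrArg (starRingEnd ℂ) hc2
    simpa using this.symm
  have hPt : (PH H)ᵀ = PH H := by
    ext i j
    fin_cases i <;> fin_cases j <;>
      simp [PH, Matrix.vecHead, Matrix.vecTail]
  have hA : PH H * (PHeps H).map (starRingEnd ℂ) = PHeps H * PH H := by
    ext i j
    fin_cases i <;> fin_cases j <;>
      simp [PH, PHeps, Matrix.mul_apply, Fin.sum_univ_three, Matrix.map_apply,
        Matrix.vecHead, Matrix.vecTail, hc2, hc4, Complex.conj_ofReal]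
  have hB : (PHeps H).map (starRingEnd ℂ) * PH H = PH H * PHeps H := by
    ext i j
    fin_cases i <;> fin_cases j <;>
      simp [PH, PHeps, Matrix.mul_apply, Fin.sum_univ_three, Matrix.map_apply,
        Matrix.vecHead, Matrix.vecTail, hc2, hc4, Complex.conj_ofReal]
  intro X _
  have hmap : ∀ M N : Matrix (Fin 3) (Fin 3) ℂ,
      (M * N).map (starRingEnd ℂ) = M.map (starRingEnd ℂ) * N.map (starRingEnd ℂ) := by
    intro M N
    ext i j
    simp [Matrix.mul_apply, Matrix.map_apply]
  have htr : ∀ M : Matrix (Fin 3) (Fin 3) ℂ,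
      Mᵀ.map (starRingEnd ℂ) = (M.map (starRingEnd ℂ))ᵀ := by
    intro M; ext i j; simp [Matrix.map_apply]
  have hneg : ∀ M : Matrix (Fin 3) (Fin 3) ℂ,
      (-M).map (starRingEnd ℂ) = -(M.map (starRingEnd ℂ)) := by
    intro M; ext i j; simp [Matrix.map_apply]
  simp only [tauH, sigmaH, hneg, Matrix.mul_neg, Matrix.neg_mul,
    Matrix.transpose_neg, Matrix.transpose_mul, hmap, htr, hPt, neg_inj,
    ← Matrix.mul_assoc]
  rw [hA, Matrix.mul_assoc _ ((PHeps H).map (starRingEnd ℂ)) (PH H), hB,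
    ← Matrix.mul_assoc]

end
end

section
/- Fix H ∈ {1,−1}. The set of matrices g ∈ SL(3,ℂ) satisfying both τ(g) = g (i.e., ḡ = P_H g P_H) and σ_H(g) = g (i.e., gᵀ P_H^ε g = P_H^ε) is exactly the group {diag(a, ā, 1) : a ∈ ℂ, |a| = 1}. -/
open Matrix Complex

noncomputable section

lemma heps : eps = (1 + Real.sqrt 3 * Complex.I) / 2 := by
  have h : (Real.pi : ℂ) * Complex.I / 3 = (Real.pi/3 : ℝ) * Complex.I := by
    push_cast; ring
  rw [eps, h, Complex.exp_mul_I, ← Complex.ofReal_cos, ← Complex.ofReal_sin,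
    Real.cos_pi_div_three, Real.sin_pi_div_three]
  push_cast; ring

lemma h3c : (Real.sqrt 3 : ℂ)^2 = 3 := by
  norm_cast; exact Real.sq_sqrt (by norm_num)

lemma e2 : eps ^ 2 = eps - 1 := by
  rw [heps]
  linear_combination ((Real.sqrt 3:ℂ)^2/4) * Complex.I_sq - (1/4:ℂ) * h3c

lemma ediff : eps^2 - eps^4 = (Real.sqrt 3 : ℂ) * Complex.I := by
  have hstep : eps^2 - eps^4 = 2*eps - 1 := by
    linear_combination (-eps^2 - eps + 1) * e2
  rw [hstep, heps]; ring

lemma hene : eps^2 - eps^4 ≠ 0 := by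
  rw [ediff]
  exact mul_ne_zero
    (Complex.ofReal_ne_zero.mpr (Real.sqrt_ne_zero'.mpr (by norm_num)))
    Complex.I_ne_zero

lemma esum : eps^2 + eps^4 = -1 := by
  linear_combination (eps^2 + eps + 1) * e2

lemma epsne : eps ≠ 0 := by
  intro h
  have := e2
  rw [h] at this
  norm_num at this

lemma ene : eps ^ 2 ≠ 0 := by
  intro h
  have h1 : eps = 1 := by linear_combination h - e2
  rw [h1] at h; norm_num at h

/-- For `H ∈ {1, −1}`, the set of `g ∈ SL(3,ℂ)` fixed by both the
anti-holomorphic involution `τ(g) = P_H ḡ P_H` and the order-6 automorphism `σ_H`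
(equivalently `gᵀ P_H^ε g = P_H^ε`) is exactly `{diag(a, ā, 1) : |a| = 1}`. -/
theorem stmt_17 (H : ℝ) (hH : H = 1 ∨ H = -1) :
    {g : Matrix (Fin 3) (Fin 3) ℂ | g.det = 1 ∧
        g.map (starRingEnd ℂ) = PH H * g * PH H ∧
        gᵀ * PHeps H * g = PHeps H}
      = {g | ∃ a : ℂ, ‖a‖ = 1 ∧
          g = !![a, 0, 0; 0, (starRingEnd ℂ) a, 0; 0, 0, 1]} := by
  have hC : (H : ℂ)^2 = 1 := by rcases hH with h | h <;> rw [h] <;> norm_num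
  have hCne : (H : ℂ) ≠ 0 := by rcases hH with h | h <;> rw [h] <;> norm_num
  ext g
  simp only [Set.mem_setOf_eq]
  constructor
  · rintro ⟨hdet, hτ, hσ⟩
    have t00 := congrFun (congrFun hτ 0) 0
    have t01 := congrFun (congrFun hτ 0) 1
    have t02 := congrFun (congrFun hτ 0) 2
    have t20 := congrFun (congrFun hτ 2) 0
    have E00 := congrFun (congrFun hσ 0) 0
    have E01 := congrFun (congrFun hσ 0) 1
    have E10 := congrFun (congrFun hσ 1) 0
    have E11 := congrFun (congrFun hσ 1) 1
    have E02 := congrFun (congrFun hσ 0) 2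
    simp [PH, PHeps, Matrix.mul_apply, Fin.sum_univ_three, Matrix.vecMul,
      dotProduct, Matrix.vecHead, Matrix.vecTail] at t00 t01 t02 t20 E00 E01 E10 E11 E02
    rw [Matrix.det_fin_three] at hdet
    -- solved entry relations
    have k12 : g 1 2 = -(H:ℂ) * (starRingEnd ℂ) (g 0 2) := by
      linear_combination (H:ℂ) * t02 - (g 1 2) * hC
    have k21 : g 2 1 = -(H:ℂ) * (starRingEnd ℂ) (g 2 0) := by
      linear_combination (H:ℂ) * t20 - (g 2 1) * hC
    simp only [← t00, ← t01, k12, k21] at E00 E01 E10 E11 E02 hdet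
    set a := g 0 0 with ha
    set b := g 0 1 with hbd
    set c := g 0 2 with hcd
    set d := g 2 0 with hdd
    set r := g 2 2 with hrd
    have ma : a * (starRingEnd ℂ) a = (Complex.normSq a : ℂ) := Complex.mul_conj a
    have mb : b * (starRingEnd ℂ) b = (Complex.normSq b : ℂ) := Complex.mul_conj b
    have md : d * (starRingEnd ℂ) d = (Complex.normSq d : ℂ) := Complex.mul_conj d
    have F1 : (eps^2 - eps^4) * (a * (starRingEnd ℂ) a - b * (starRingEnd ℂ) b)
        = (eps^2 - eps^4) * 1 := by
      linear_combination E01 - E10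
    have F1' : a * (starRingEnd ℂ) a - b * (starRingEnd ℂ) b = 1 :=
      mul_left_cancel₀ hene F1
    have F2 : a * (starRingEnd ℂ) a + b * (starRingEnd ℂ) b
        - 2 * (d * (starRingEnd ℂ) d) = 1 := by
      linear_combination -(E01 + E10)
        + (a * (starRingEnd ℂ) a + b * (starRingEnd ℂ) b - 1) * esum
        + 2 * (d * (starRingEnd ℂ) d) * hC
    have G1 : a * (starRingEnd ℂ) b = -(H:ℂ) * d^2 := by
      linear_combination -E00 + (a * (starRingEnd ℂ) b) * esum
    have G2 : (starRingEnd ℂ) a * b = -(H:ℂ) * ((starRingEnd ℂ) d)^2 := by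
      linear_combination -E11 + ((starRingEnd ℂ) a * b) * esum
        - (H:ℂ) * ((starRingEnd ℂ) d)^2 * hC
    have F3 : (a * (starRingEnd ℂ) a) * (b * (starRingEnd ℂ) b)
        = (d * (starRingEnd ℂ) d)^2 := by
      linear_combination ((starRingEnd ℂ) a * b) * G1 + (-(H:ℂ) * d^2) * G2
        + (d^2 * ((starRingEnd ℂ) d)^2) * hC
    simp only [ma, mb, md] at F1' F2 F3
    have r1 : Complex.normSq a - Complex.normSq b = 1 := by exact_mod_cast F1'
    have r2 : Complex.normSq a + Complex.normSq b - 2 * Complex.normSq d = 1 := by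
      exact_mod_cast F2
    have r3 : Complex.normSq a * Complex.normSq b = (Complex.normSq d)^2 := by
      exact_mod_cast F3
    have rb : Complex.normSq b = 0 := by nlinarith [Complex.normSq_nonneg b, Complex.normSq_nonneg d]
    have rd : Complex.normSq d = 0 := by nlinarith [Complex.normSq_nonneg d]
    have rna : Complex.normSq a = 1 := by linarith
    have hb : b = 0 := Complex.normSq_eq_zero.mp rb
    have hd : d = 0 := Complex.normSq_eq_zero.mp rd
    have hb' : (starRingEnd ℂ) b = 0 := by rw [hb]; simp
    have hd' : (starRingEnd ℂ) d = 0 := by rw [hd]; simp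
    have hane : a ≠ 0 := by
      intro h; rw [h] at rna; simp at rna
    have h2 : -(H:ℂ) * eps ^ 2 * a * ((starRingEnd ℂ) c) = 0 := by
      linear_combination E02 + (-(eps^4) * c) * hb' + ((H:ℂ) * r) * hd
    have hc : c = 0 := by
      simpa [hCne, epsne, hane] using h2
    have h3 : (starRingEnd ℂ) c = 0 := by rw [hc]; simp
    have hna1 : ((Complex.normSq a : ℝ) : ℂ) = 1 := by exact_mod_cast rna
    have hr : r = 1 := by
      linear_combination hdet - r * ma - r * hna1
        + ((H:ℂ)^2 * a * (starRingEnd ℂ) d + (H:ℂ) * b * d) * h3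
        + (b * r + (H:ℂ) * c * (starRingEnd ℂ) d) * hb'
        + (c * (starRingEnd ℂ) a) * hd
    refine ⟨a, ?_, ?_⟩
    · rw [Complex.norm_def, rna, Real.sqrt_one]
    · ext i j
      fin_cases i <;> fin_cases j <;>
        simp [Matrix.vecHead, Matrix.vecTail, ← ha, ← hbd, ← hcd, ← hdd, ← hrd,
          hb, hc, hd, hr, ← t00, ← t01, k12, k21, hb', hd', h3]
  · rintro ⟨a, hab, rfl⟩
    have hna : a * (starRingEnd ℂ) a = 1 := by
      rw [Complex.mul_conj]
      norm_cast
      rw [Complex.normSq_eq_norm_sq, hab]; norm_num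
    refine ⟨?_, ?_, ?_⟩
    · rw [Matrix.det_fin_three]
      simp
      linear_combination hna
    · ext i j
      fin_cases i <;> fin_cases j <;>
        simp [PH, Matrix.mul_apply, Fin.sum_univ_three, Matrix.vecMul,
          dotProduct, Matrix.vecHead, Matrix.vecTail] <;>
        linear_combination -hC
    · ext i j
      fin_cases i <;> fin_cases j <;>
        simp [PHeps, Matrix.mul_apply, Fin.sum_univ_three, Matrix.vecMul,
          dotProduct, Matrix.vecHead, Matrix.vecTail] <;>
        first
          | linear_combination eps^2 * hna
          | linear_combination eps^4 * hna
          | ring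

end
end

section
/- Fix H ∈ {1,−1} and let P₂ = diag(ε⁴, ε², 1). The set of matrices g ∈ SL(3,ℂ) satisfying τ(g) = g (i.e., ḡ = P_H g P_H) and g P₂ = P₂ g is exactly {diag(a, ā, |a|⁻²) : a ∈ ℂ, a ≠ 0}, i.e., the diagonal matrices diag(a, ā, e) with a ∈ ℂ nonzero, e ∈ ℝ and a·ā·e = 1. -/
open Matrix Complex

noncomputable section

/-- `P₂ = diag(ε⁴, ε², 1)`. -/
def P2 : Matrix (Fin 3) (Fin 3) ℂ :=
  !![eps ^ 4, 0, 0; 0, eps ^ 2, 0; 0, 0, 1]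

lemma eps_sq : eps ^ 2 = Complex.exp ((2*Real.pi/3 : ℝ) * Complex.I) := by
  rw [eps, ← Complex.exp_nat_mul]; congr 1; push_cast; ring

lemma eps_four : eps ^ 4 = Complex.exp ((4*Real.pi/3 : ℝ) * Complex.I) := by
  rw [eps, ← Complex.exp_nat_mul]; congr 1; push_cast; ring

lemma eps_sq_im : (eps ^ 2).im = Real.sqrt 3 / 2 := by
  rw [eps_sq, Complex.exp_ofReal_mul_I_im]
  have : (2*Real.pi/3) = Real.pi - Real.pi/3 := by ring
  rw [this, Real.sin_pi_sub, Real.sin_pi_div_three]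

lemma eps_four_im : (eps ^ 4).im = -(Real.sqrt 3 / 2) := by
  rw [eps_four, Complex.exp_ofReal_mul_I_im]
  have : (4*Real.pi/3) = Real.pi/3 + Real.pi := by ring
  rw [this, Real.sin_add_pi, Real.sin_pi_div_three]

lemma sqrt3_pos : (0:ℝ) < Real.sqrt 3 / 2 := by positivity

lemma eps_sq_ne_one : eps ^ 2 ≠ 1 := by
  intro h
  have h' := congrArg Complex.im h
  rw [eps_sq_im] at h'
  simp only [Complex.one_im] at h'
  linarith [sqrt3_pos]

lemma eps_four_ne_one : eps ^ 4 ≠ 1 := by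
  intro h
  have h' := congrArg Complex.im h
  rw [eps_four_im] at h'
  simp only [Complex.one_im] at h'
  linarith [sqrt3_pos]

lemma eps_four_ne_sq : eps ^ 4 ≠ eps ^ 2 := by
  intro h
  have h' := congrArg Complex.im h
  rw [eps_four_im, eps_sq_im] at h'
  linarith [sqrt3_pos]

/-- For `H ∈ {1, −1}`, the set of `g ∈ SL(3,ℂ)` fixed by
`τ(g) = P_H ḡ P_H` and commuting with `P₂ = diag(ε⁴, ε², 1)` is exactly
`{diag(a, ā, |a|⁻²) : a ∈ ℂ, a ≠ 0}`, i.e. the diagonal matrices `diag(a, ā, e)` with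
`a ∈ ℂ` nonzero, `e ∈ ℝ` and `a·ā·e = 1`. -/
theorem stmt_18 (H : ℝ) (hH : H = 1 ∨ H = -1) :
    {g : Matrix (Fin 3) (Fin 3) ℂ | g.det = 1 ∧
        g.map (starRingEnd ℂ) = PH H * g * PH H ∧
        g * P2 = P2 * g}
      = {g | ∃ (a : ℂ) (e : ℝ), a ≠ 0 ∧ a * (starRingEnd ℂ) a * (e : ℂ) = 1 ∧
          g = !![a, 0, 0; 0, (starRingEnd ℂ) a, 0; 0, 0, (e : ℂ)]} := by
  have hH2 : (H:ℂ) * (H:ℂ) = 1 := by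
    rcases hH with h | h <;> rw [h] <;> norm_num
  ext g
  simp only [Set.mem_setOf_eq]
  constructor
  · rintro ⟨hdet, hconj, hcomm⟩
    have hc : ∀ i j, (g * P2) i j = (P2 * g) i j := fun i j => by rw [hcomm]
    have e01 := hc 0 1; have e02 := hc 0 2; have e10 := hc 1 0
    have e12 := hc 1 2; have e20 := hc 2 0; have e21 := hc 2 1
    simp [Matrix.mul_apply, Fin.sum_univ_three, P2, Matrix.vecHead,
      Matrix.vecTail] at e01 e02 e10 e12 e20 e21
    have h01 : g 0 1 = 0 := by
      by_contra h
      exact eps_four_ne_sq (mul_right_cancel₀ h (by linear_combination e01)).symm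
    have h10 : g 1 0 = 0 := by
      by_contra h
      exact eps_four_ne_sq (mul_right_cancel₀ h (by linear_combination e10))
    have h02 : g 0 2 = 0 := by
      by_contra h
      exact eps_four_ne_one (mul_right_cancel₀ h (by linear_combination e02)).symm
    have h20 : g 2 0 = 0 := by
      by_contra h
      exact eps_four_ne_one (mul_right_cancel₀ h (by linear_combination e20))
    have h12 : g 1 2 = 0 := by
      by_contra h
      exact eps_sq_ne_one (mul_right_cancel₀ h (by linear_combination e12)).symm
    have h21 : g 2 1 = 0 := by
      by_contra h
      exact eps_sq_ne_one (mul_right_cancel₀ h (by linear_combination e21))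
    have hj : ∀ i j, (g.map (starRingEnd ℂ)) i j = (PH H * g * PH H) i j :=
      fun i j => by rw [hconj]
    have j00 := hj 0 0; have j22 := hj 2 2
    simp [Matrix.mul_apply, Fin.sum_univ_three, PH, Matrix.vecHead, Matrix.vecTail,
      Matrix.vecMul, dotProduct] at j00 j22
    -- j00 : conj (g 0 0) = g 1 1, j22 : conj (g 2 2) = H * g 2 2 * H
    have hereal : (starRingEnd ℂ) (g 2 2) = g 2 2 := by
      rw [j22]; linear_combination (g 2 2) * hH2
    have he' : ((g 2 2).re : ℂ) = g 2 2 := Complex.conj_eq_iff_re.mp hereal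
    have hdet' : g 0 0 * g 1 1 * g 2 2 = 1 := by
      rw [Matrix.det_fin_three] at hdet
      rw [h01, h02, h10, h12, h20, h21] at hdet
      linear_combination hdet
    refine ⟨g 0 0, (g 2 2).re, ?_, ?_, ?_⟩
    · intro h; rw [h] at hdet'; simp at hdet'
    · rw [j00, he', hdet']
    · ext i j
      fin_cases i <;> fin_cases j <;>
        simp [h01, h02, h10, h12, h20, h21, j00, he', Matrix.vecHead, Matrix.vecTail]
  · rintro ⟨a, e, ha, hae, rfl⟩
    have hereal : (starRingEnd ℂ) (e:ℂ) = (e:ℂ) := Complex.conj_ofReal e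
    refine ⟨?_, ?_, ?_⟩
    · rw [Matrix.det_fin_three]; simp; linear_combination hae
    · ext i j
      fin_cases i <;> fin_cases j <;>
        simp [PH, Matrix.mul_apply, Fin.sum_univ_three, hereal, Matrix.vecHead,
          Matrix.vecTail] <;>
        linear_combination -(e:ℂ) * hH2
    · ext i j
      fin_cases i <;> fin_cases j <;>
        simp [P2, Matrix.mul_apply, Fin.sum_univ_three, Matrix.vecHead, Matrix.vecTail] <;>
        ring
end
end
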